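/- Suppose a convolution operator f ↦ (K ⊗ δ) * f, with K a (possibly ℓ²-valued) kernel on ℝ³ acting in the x-variable only, satisfies the bound ‖(K⊗δ) * f‖_{L^{p₁}(dx)L^q(dy)} ≲ ‖f‖_{L^{p₂}(dx)L^q(dy)} for some 1 ≤ p₁, p₂, q ≤ ∞. Then the same operator satisfies ‖(K⊗δ) * f‖_{L^{p₁}(d(x-y))L^q(d(x+y))} ≲ ‖f‖_{L^{p₂}(d(x-y))L^q(d(x+y))}, i.e. the mixed-norm bound transfers to the rotated coordinates (x-y, x+y). -/

import Mathlib

open MeasureTheory Complex Real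
open scoped ENNReal

noncomputable section

abbrev E3 := EuclideanSpace ℝ (Fin 3)

def Rrot (z : E3 × E3) : E3 × E3 :=
  (((Real.sqrt 2)⁻¹ : ℝ) • (z.1 + z.2), ((Real.sqrt 2)⁻¹ : ℝ) • (z.2 - z.1))

/-- Mixed norm `L^p(dx)L^q(dy)` of an `H`-valued function on `ℝ³ × ℝ³`. -/
def mnorm {H : Type*} [NormedAddCommGroup H] (p q : ℝ≥0∞) (f : E3 × E3 → H) : ℝ≥0∞ :=
  eLpNorm (fun x : E3 => (eLpNorm (fun y : E3 => f (x, y)) q volume).toReal) p volume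

/-- Rotated mixed norm `L^p(d(x-y))L^q(d(x+y))`, defined as `‖f ∘ R‖_{L^p(dx)L^q(dy)}`. -/
def rnorm {H : Type*} [NormedAddCommGroup H] (p q : ℝ≥0∞) (f : E3 × E3 → H) : ℝ≥0∞ :=
  mnorm p q (f ∘ Rrot)

/-- Convolution with the kernel `K(x)δ(y)`, `K` possibly vector (e.g. `ℓ²`) valued,
acting in the `x`-variable only: `((K⊗δ) * f)(x,y) = ∫ f(x-x',y) • K(x') dx'`. -/
def convKdelta {H : Type*} [NormedAddCommGroup H] [NormedSpace ℂ H]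
    (K : E3 → H) (f : E3 × E3 → ℂ) (z : E3 × E3) : H :=
  ∫ x' : E3, f (z.1 - x', z.2) • K x'

/-!
The rotation `R` factors as `R (x, y + x) = S (√2 x, y)` with `S (x, y) = (x + y/√2, y/√2)`.
The shear `(x, y) ↦ (x, y + x)` preserves the mixed norm `L^p(dx)L^q(dy)` and the dilation
`x ↦ √2 x` only rescales it, so `‖F‖_{L^p(d(x-y))L^q(d(x+y))}` is a fixed multiple of
`‖F ∘ S‖_{L^p(dx)L^q(dy)}`. Since `S` translates `x` by an amount depending on `y` only,
convolution in `x` commutes with composition by `S`, and the bound for `f ∘ S` transfers.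
-/

section Rescaling

variable {F : Type*} [NormedAddCommGroup F]

theorem eLpNorm_comp_add_right {G : Type*} [AddGroup G] [MeasurableSpace G] [MeasurableAdd G]
    (μ : Measure G) [μ.IsAddRightInvariant] (g : G → F) (p : ℝ≥0∞) (v : G) :
    eLpNorm (fun x => g (x + v)) p μ = eLpNorm g p μ := by
  change eLpNorm (g ∘ MeasurableEquiv.addRight v) p μ = _
  rw [← (MeasurableEquiv.addRight v).measurableEmbedding.eLpNorm_map_measure,
    MeasurableEquiv.coe_addRight, (measurePreserving_add_right μ v).map_eq]

theorem eLpNorm_comp_smul {E : Type*} [NormedAddCommGroup E] [NormedSpace ℝ E]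
    [MeasurableSpace E] [BorelSpace E] [FiniteDimensional ℝ E]
    (μ : Measure E) [μ.IsAddHaarMeasure] (g : E → F) (p : ℝ≥0∞) {c : ℝ} (hc : c ≠ 0) :
    eLpNorm (fun x => g (c • x)) p μ
      = ENNReal.ofReal |(c ^ Module.finrank ℝ E)⁻¹| ^ (1 / p).toReal * eLpNorm g p μ := by
  change eLpNorm (g ∘ Homeomorph.smulOfNeZero c hc) p μ = _
  rw [← (Homeomorph.smulOfNeZero c hc).measurableEmbedding.eLpNorm_map_measure]
  change eLpNorm g p (Measure.map (c • ·) μ) = _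
  rw [Measure.map_addHaar_smul μ hc, eLpNorm_smul_measure_of_ne_zero (by positivity), smul_eq_mul]

end Rescaling

section MixedNorm

variable {H : Type*} [NormedAddCommGroup H]

theorem mnorm_comp_shear (p q : ℝ≥0∞) (F : E3 × E3 → H) (v : E3 → E3) :
    mnorm p q (fun z => F (z.1, z.2 + v z.1)) = mnorm p q F := by
  unfold mnorm
  congr 1
  funext x
  exact congrArg ENNReal.toReal (eLpNorm_comp_add_right volume (fun y => F (x, y)) q (v x))

theorem mnorm_comp_smul_fst (p q : ℝ≥0∞) (F : E3 × E3 → H) {c : ℝ} (hc : c ≠ 0) :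
    mnorm p q (fun z => F (c • z.1, z.2))
      = ENNReal.ofReal |(c ^ 3)⁻¹| ^ (1 / p).toReal * mnorm p q F := by
  simpa [mnorm] using
    eLpNorm_comp_smul volume (fun x => (eLpNorm (fun y => F (x, y)) q volume).toReal) p hc

def skewScale (z : E3 × E3) : E3 × E3 :=
  (z.1 + (Real.sqrt 2)⁻¹ • z.2, (Real.sqrt 2)⁻¹ • z.2)

theorem Rrot_shear (x y : E3) : Rrot (x, y + x) = skewScale (Real.sqrt 2 • x, y) := by
  have hs : (Real.sqrt 2)⁻¹ + (Real.sqrt 2)⁻¹ = Real.sqrt 2 := by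
    field_simp
    rw [Real.sq_sqrt zero_le_two]
    norm_num
  have hx : (Real.sqrt 2)⁻¹ • (x + (y + x))
      = ((Real.sqrt 2)⁻¹ + (Real.sqrt 2)⁻¹) • x + (Real.sqrt 2)⁻¹ • y := by module
  simp only [Rrot, skewScale, hx, hs, add_sub_cancel_right]

theorem rnorm_eq_mul_mnorm_comp_skewScale (p q : ℝ≥0∞) (F : E3 × E3 → H) :
    rnorm p q F
      = ENNReal.ofReal |(Real.sqrt 2 ^ 3)⁻¹| ^ (1 / p).toReal * mnorm p q (F ∘ skewScale) := by
  rw [rnorm, ← mnorm_comp_shear p q _ id, ← mnorm_comp_smul_fst p q _ (by positivity)]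
  simp only [Function.comp_apply, id, Rrot_shear]

end MixedNorm

theorem convKdelta_comp_skewScale {H : Type*} [NormedAddCommGroup H] [NormedSpace ℂ H]
    (K : E3 → H) (f : E3 × E3 → ℂ) :
    convKdelta K (f ∘ skewScale) = convKdelta K f ∘ skewScale := by
  ext z
  simp only [convKdelta, skewScale, Function.comp_apply, sub_add_eq_add_sub]

theorem statement2_general {H : Type*} [NormedAddCommGroup H] [NormedSpace ℂ H]
    (p₁ p₂ q : ℝ≥0∞)
    (K : E3 → H) (C : ℝ≥0∞)
    (hbd : ∀ f : E3 × E3 → ℂ, mnorm p₁ q (convKdelta K f) ≤ C * mnorm p₂ q f) :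
    ∃ A : ℝ≥0∞, A ≠ ∞ ∧
      ∀ f : E3 × E3 → ℂ, rnorm p₁ q (convKdelta K f) ≤ A * C * rnorm p₂ q f := by
  set κ : ℝ≥0∞ → ℝ≥0∞ := fun p => ENNReal.ofReal |(Real.sqrt 2 ^ 3)⁻¹| ^ (1 / p).toReal
  have hκ_pos : ∀ p, 0 < κ p := fun p => ENNReal.rpow_pos (by simp [abs_pos]) ENNReal.ofReal_ne_top
  have hκ_ne_top : ∀ p, κ p ≠ ∞ := fun p =>
    ENNReal.rpow_ne_top_of_nonneg ENNReal.toReal_nonneg ENNReal.ofReal_ne_top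
  refine ⟨κ p₁ * (κ p₂)⁻¹,
    ENNReal.mul_ne_top (hκ_ne_top p₁) (ENNReal.inv_ne_top.2 (hκ_pos p₂).ne'), fun f => ?_⟩
  have hf : mnorm p₂ q (f ∘ skewScale) = (κ p₂)⁻¹ * rnorm p₂ q f := by
    rw [rnorm_eq_mul_mnorm_comp_skewScale, ← mul_assoc,
      ENNReal.inv_mul_cancel (hκ_pos p₂).ne' (hκ_ne_top p₂), one_mul]
  calc rnorm p₁ q (convKdelta K f)
      = κ p₁ * mnorm p₁ q (convKdelta K (f ∘ skewScale)) := by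
        rw [rnorm_eq_mul_mnorm_comp_skewScale, convKdelta_comp_skewScale]
    _ ≤ κ p₁ * (C * mnorm p₂ q (f ∘ skewScale)) := by gcongr; exact hbd _
    _ = κ p₁ * (κ p₂)⁻¹ * C * rnorm p₂ q f := by rw [hf]; ring

/-- If the operator `f ↦ (K⊗δ) * f` is bounded from
`L^{p₂}(dx)L^q(dy)` to `L^{p₁}(dx)L^q(dy)`, then it is bounded (with a comparable
constant) from `L^{p₂}(d(x-y))L^q(d(x+y))` to `L^{p₁}(d(x-y))L^q(d(x+y))`. -/
theorem statement2 {H : Type*} [NormedAddCommGroup H] [NormedSpace ℂ H] [CompleteSpace H]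
    (p₁ p₂ q : ℝ≥0∞) (hp₁ : 1 ≤ p₁) (hp₂ : 1 ≤ p₂) (hq : 1 ≤ q)
    (K : E3 → H) (C : ℝ≥0∞)
    (hbd : ∀ f : E3 × E3 → ℂ, mnorm p₁ q (convKdelta K f) ≤ C * mnorm p₂ q f) :
    ∃ A : ℝ≥0∞, A ≠ ∞ ∧
      ∀ f : E3 × E3 → ℂ, rnorm p₁ q (convKdelta K f) ≤ A * C * rnorm p₂ q f :=
  statement2_general p₁ p₂ q K C hbd
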